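/- With the Cooley–Tukey sequences a_{k,i} as defined from a ∈ R^n, the 'decimation-in-time' relation holds: for k ∈ {0,...,p−1}, i ∈ {0,...,2^{p−k−1}−1}, and j ∈ {0,...,2^k−1}, a_{k,[2^{p−k−1}(2j)+i]_p} = a_{k+1,[2^{p−k−1}(2j)+i]_p} + ω^{2^k i} a_{k+1,[2^{p−k−1}(2j+1)+i]_p} and a_{k,[2^{p−k−1}(2j+1)+i]_p} = a_{k+1,[2^{p−k−1}(2j)+i]_p} − ω^{2^k i} a_{k+1,[2^{p−k−1}(2j+1)+i]_p}. -/

import Mathlib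

def bitRev (k i : ℕ) : ℕ := ∑ j ∈ Finset.range k, 2 ^ (k - 1 - j) * (i / 2 ^ j % 2)

lemma bitRev_zero (i : ℕ) : bitRev 0 i = 0 := by simp [bitRev]

lemma bitRev_right_zero (k : ℕ) : bitRev k 0 = 0 := by simp [bitRev]

lemma bitRev_succ (k i : ℕ) : bitRev (k + 1) i = bitRev k (i / 2) + 2 ^ k * (i % 2) := by
  unfold bitRev
  rw [Finset.sum_range_succ']
  simp only [pow_zero, Nat.div_one]
  congr 1
  apply Finset.sum_congr rfl
  intro j hj
  have h1 : k + 1 - 1 - (j + 1) = k - 1 - j := by omega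
  have h2 : i / 2 ^ (j + 1) = i / 2 / 2 ^ j := by
    rw [Nat.div_div_eq_div_mul]; ring_nf
  rw [h1, h2]

lemma bitRev_succ' (k i : ℕ) : bitRev (k + 1) i = 2 * bitRev k i + i / 2 ^ k % 2 := by
  unfold bitRev
  rw [Finset.sum_range_succ, Finset.mul_sum]
  congr 1
  · apply Finset.sum_congr rfl
    intro j hj
    rw [Finset.mem_range] at hj
    rw [← mul_assoc]
    congr 1
    rw [← pow_succ']
    congr 1
    omega
  · simp

lemma bitRev_lt (k i : ℕ) : bitRev k i < 2 ^ k := by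
  induction k generalizing i with
  | zero => simp [bitRev]
  | succ k ih =>
    rw [bitRev_succ]
    have h1 := ih (i / 2)
    have h2 : i % 2 ≤ 1 := by omega
    have : 2 ^ k * (i % 2) ≤ 2 ^ k := by
      calc 2 ^ k * (i % 2) ≤ 2 ^ k * 1 := Nat.mul_le_mul_left _ h2
      _ = 2 ^ k := by ring
    rw [pow_succ]
    omega

lemma div_mod_aux (x c j k : ℕ) (hj : j < k) :
    (x + 2 ^ k * c) / 2 ^ j % 2 = x / 2 ^ j % 2 := by
  have h1 : 2 ^ k * c = 2 ^ j * (2 * (2 ^ (k - j - 1) * c)) := by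
    rw [← mul_assoc, ← mul_assoc, ← pow_succ, ← pow_add]
    have : j + 1 + (k - j - 1) = k := by omega
    rw [this]
  rw [h1, Nat.add_mul_div_left _ _ (Nat.two_pow_pos j),
    Nat.add_mul_mod_self_left]

lemma bitRev_add_pow (k x c : ℕ) : bitRev k (x + 2 ^ k * c) = bitRev k x := by
  unfold bitRev
  apply Finset.sum_congr rfl
  intro j hj
  rw [Finset.mem_range] at hj
  rw [div_mod_aux x c j k hj]

lemma bitRev_involution (k : ℕ) : ∀ i < 2 ^ k, bitRev k (bitRev k i) = i := by
  induction k with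
  | zero => intro i hi; interval_cases i; simp [bitRev]
  | succ k ih =>
    intro i hi
    rw [bitRev_succ k i, bitRev_succ']
    have hx : bitRev k (i / 2) < 2 ^ k := bitRev_lt k (i / 2)
    have h1 : bitRev k (bitRev k (i / 2) + 2 ^ k * (i % 2)) = i / 2 := by
      rw [bitRev_add_pow, ih (i / 2) (by omega)]
    have h2 : (bitRev k (i / 2) + 2 ^ k * (i % 2)) / 2 ^ k % 2 = i % 2 := by
      rw [Nat.add_mul_div_left _ _ (Nat.two_pow_pos k),
        Nat.div_eq_of_lt hx]
      omega
    rw [h1, h2]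
    omega

lemma bitRev_split (k : ℕ) : ∀ m i j, i < 2 ^ m →
    bitRev (m + k) (2 ^ m * j + i) = 2 ^ k * bitRev m i + bitRev k j := by
  intro m
  induction m with
  | zero =>
    intro i j hi
    interval_cases i
    simp [bitRev_zero]
  | succ m ih =>
    intro i j hi
    have hstep : m + 1 + k = (m + k) + 1 := by omega
    rw [hstep, bitRev_succ]
    have hq : (2:ℕ) ^ (m + 1) * j = 2 * (2 ^ m * j) := by
      rw [pow_succ]; ring
    have hdiv : (2 ^ (m + 1) * j + i) / 2 = 2 ^ m * j + i / 2 := by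
      rw [hq]; omega
    have hmod : (2 ^ (m + 1) * j + i) % 2 = i % 2 := by
      rw [hq]; omega
    rw [hdiv, hmod, ih (i / 2) j (by omega), bitRev_succ, pow_add]
    ring
/-- Decimation-in-time relation for the Cooley–Tukey sequences, in bit-reversed indexing. -/
theorem decimation_in_time {R : Type*} [CommRing R]
    (p : ℕ) (hp : 1 ≤ p) (ω : R)
    (hω1 : ω ^ 2 ^ p = 1) (hω2 : ω ^ 2 ^ (p - 1) = -1)
    (a : ℕ → R) (A : ℕ → ℕ → R)
    (hAp : ∀ i < 2 ^ p, A p i = a i)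
    (hrec : ∀ k < p, ∀ i < 2 ^ (p - k - 1), ∀ j < 2 ^ k,
      A k (2 ^ k * (2 * i) + j)
          = A (k + 1) (2 ^ k * (2 * i) + j)
            + ω ^ bitRev p (2 * i) * A (k + 1) (2 ^ k * (2 * i + 1) + j) ∧
      A k (2 ^ k * (2 * i + 1) + j)
          = A (k + 1) (2 ^ k * (2 * i) + j)
            - ω ^ bitRev p (2 * i) * A (k + 1) (2 ^ k * (2 * i + 1) + j)) :
    ∀ k < p, ∀ i < 2 ^ (p - k - 1), ∀ j < 2 ^ k,
      A k (bitRev p (2 ^ (p - k - 1) * (2 * j) + i))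
          = A (k + 1) (bitRev p (2 ^ (p - k - 1) * (2 * j) + i))
            + ω ^ (2 ^ k * i) * A (k + 1) (bitRev p (2 ^ (p - k - 1) * (2 * j + 1) + i)) ∧
      A k (bitRev p (2 ^ (p - k - 1) * (2 * j + 1) + i))
          = A (k + 1) (bitRev p (2 ^ (p - k - 1) * (2 * j) + i))
            - ω ^ (2 ^ k * i) * A (k + 1) (bitRev p (2 ^ (p - k - 1) * (2 * j + 1) + i)) := by
  intro k hk i hi j hj
  set m := p - k - 1 with hmdef
  have hm : m + (k + 1) = p := by omega
  have hm' : (m + 1) + k = p := by omega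
  have hb : bitRev m i < 2 ^ m := bitRev_lt m i
  have E1 : bitRev p (2 ^ m * (2 * j) + i) = 2 ^ k * (2 * bitRev m i) + bitRev k j := by
    rw [← hm, bitRev_split (k + 1) m i (2 * j) hi, bitRev_succ]
    have h1 : 2 * j / 2 = j := by omega
    have h2 : 2 * j % 2 = 0 := by omega
    rw [h1, h2, pow_succ]
    ring
  have E2 : bitRev p (2 ^ m * (2 * j + 1) + i)
      = 2 ^ k * (2 * bitRev m i + 1) + bitRev k j := by
    rw [← hm, bitRev_split (k + 1) m i (2 * j + 1) hi, bitRev_succ]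
    have h1 : (2 * j + 1) / 2 = j := by omega
    have h2 : (2 * j + 1) % 2 = 1 := by omega
    rw [h1, h2, pow_succ]
    ring
  have E3 : bitRev p (2 * bitRev m i) = 2 ^ k * i := by
    have h2b : 2 * bitRev m i < 2 ^ (m + 1) := by rw [pow_succ]; omega
    have hrw : 2 * bitRev m i = 2 ^ (m + 1) * 0 + 2 * bitRev m i := by ring
    rw [← hm', hrw, bitRev_split k (m + 1) (2 * bitRev m i) 0 (by omega), bitRev_succ]
    have h1 : 2 * bitRev m i / 2 = bitRev m i := by omega
    have h2 : 2 * bitRev m i % 2 = 0 := by omega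
    rw [h1, h2, bitRev_right_zero, bitRev_involution m i hi]
    ring
  obtain ⟨H1, H2⟩ := hrec k hk (bitRev m i) hb (bitRev k j) (bitRev_lt k j)
  rw [E3] at H1 H2
  rw [E1, E2]
  exact ⟨H1, H2⟩
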